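/- Let 𝒟 be a stable class of morphisms in a small category ℂ, with associated representable natural transformation π : 𝒟₁ ⟶ 𝒟₀. Then a morphism g : D → C of ℂ lies in 𝒟 if and only if there exist maps x : yC ⟶ 𝒟₀ and η : yD ⟶ 𝒟₁ making the square with top η, left y(g), bottom x, right π a pullback of presheaves. In other words, 𝒟 is exactly the stable class of maps determined by the representable natural transformation π. -/

import Mathlib

open CategoryTheory Category Limits Opposite MonoidalCategory

universe v u

noncomputable section

namespace NatModel

variable {C : Type u} [SmallCategory C]


/-- A class of morphisms is **stable** if in every pullback square whose right-hand vertical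
morphism lies in the class, the left-hand vertical morphism also lies in the class. -/
def StableClass {C : Type u} [Category.{u} C] (D : MorphismProperty C) : Prop :=
  ∀ ⦃P X Y Z : C⦄ (fst : P ⟶ X) (snd : P ⟶ Y) (f : X ⟶ Z) (g : Y ⟶ Z),
    IsPullback fst snd f g → D f → D snd

/-- An element of the presheaf `𝒟₁` at `c`: a pair `(a, d)` with `d ∈ 𝒟` and
`a : c ⟶ dom d`. -/
structure DOneElt (D : MorphismProperty C) (c : C) : Type u where
  {mid : C}
  {tgt : C}
  a : c ⟶ mid
  d : mid ⟶ tgt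
  hd : D d

/-- An element of the presheaf `𝒟₀` at `c`: a pair `(b, d)` with `d ∈ 𝒟` and
`b : c ⟶ cod d`. -/
structure DZeroElt (D : MorphismProperty C) (c : C) : Type u where
  {src : C}
  {tgt : C}
  b : c ⟶ tgt
  d : src ⟶ tgt
  hd : D d

/-- The presheaf `𝒟₁` of "terms" of a class of maps `𝒟`; the action is by precomposition
in the first component. -/
@[simps]
def DOne (D : MorphismProperty C) : Cᵒᵖ ⥤ Type u where
  obj c := DOneElt D c.unop
  map s := TypeCat.ofHom fun e => ⟨s.unop ≫ e.a, e.d, e.hd⟩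
  map_id := by intro c; ext e; cases e; simp
  map_comp := by intro _ _ _ s t; ext e; cases e; simp

/-- The presheaf `𝒟₀` of "types" of a class of maps `𝒟`; the action is by precomposition
in the first component. -/
@[simps]
def DZero (D : MorphismProperty C) : Cᵒᵖ ⥤ Type u where
  obj c := DZeroElt D c.unop
  map s := TypeCat.ofHom fun e => ⟨s.unop ≫ e.b, e.d, e.hd⟩
  map_id := by intro c; ext e; cases e; simp
  map_comp := by intro _ _ _ s t; ext e; cases e; simp

/-- The natural transformation `π : 𝒟₁ ⟶ 𝒟₀`, given by `π (a, d) = (d ∘ a, d)`. -/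
@[simps]
def piD (D : MorphismProperty C) : DOne D ⟶ DZero D where
  app c := TypeCat.ofHom fun e => ⟨e.a ≫ e.d, e.d, e.hd⟩
  naturality := by intro c c' s; ext e; cases e; simp [DZero, DOne]

/-! Every element of `𝒟₀` at `c` is a map `b : c ⟶ cod d` for some `d ∈ 𝒟`, so every
`x : y c ⟶ 𝒟₀` factors as `y b` followed by the generic map classifying `(𝟙, d)`, and the
square of `y d` over these generic maps is itself a pullback of `π`. By pasting, a pullback of
`π` along `x` is then a pullback of `y d` along `y b`; the Yoneda embedding reflects it to a
pullback square in `ℂ` whose right side is `d`, and stability puts its left side in `𝒟`. -/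

variable {D : MorphismProperty C}

def genericTerm {A B : C} {d : A ⟶ B} (hd : D d) : yoneda.obj A ⟶ DOne D :=
  yonedaEquiv.symm ⟨𝟙 A, d, hd⟩

def genericType {A B : C} {d : A ⟶ B} (hd : D d) : yoneda.obj B ⟶ DZero D :=
  yonedaEquiv.symm ⟨𝟙 B, d, hd⟩

section
variable {A B : C} {d : A ⟶ B} (hd : D d)

@[simp]
lemma genericTerm_app_apply {c : Cᵒᵖ} (a : c.unop ⟶ A) :
    (genericTerm hd).app c a = ⟨a, d, hd⟩ := by
  change DOneElt.mk (a ≫ 𝟙 A) d hd = _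
  rw [comp_id]

@[simp]
lemma genericType_app_apply {c : Cᵒᵖ} (b : c.unop ⟶ B) :
    (genericType hd).app c b = ⟨b, d, hd⟩ := by
  change DZeroElt.mk (b ≫ 𝟙 B) d hd = _
  rw [comp_id]

lemma piD_app_mk {c : Cᵒᵖ} (a : c.unop ⟶ A) :
    (piD D).app c ⟨a, d, hd⟩ = ⟨a ≫ d, d, hd⟩ :=
  rfl

lemma yonedaEquiv_symm_dOneElt_mk {c : C} (a : c ⟶ A) :
    yonedaEquiv.symm (⟨a, d, hd⟩ : DOneElt D c) = yoneda.map a ≫ genericTerm hd := by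
  ext c' u
  exact (genericTerm_app_apply hd (u ≫ a)).symm

lemma yonedaEquiv_symm_dZeroElt_mk {c : C} (b : c ⟶ B) :
    yonedaEquiv.symm (⟨b, d, hd⟩ : DZeroElt D c) = yoneda.map b ≫ genericType hd := by
  ext c' u
  exact (genericType_app_apply hd (u ≫ b)).symm

end

lemma DOneElt.eq_mk_of_piD_app_eq {c A B : C} {e : DOneElt D c} {b : c ⟶ B} {d : A ⟶ B}
    {hd : D d} (h : (piD D).app (op c) e = ⟨b, d, hd⟩) :
    ∃ a : c ⟶ A, e = ⟨a, d, hd⟩ ∧ a ≫ d = b := by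
  obtain ⟨a, d', hd'⟩ := e
  obtain ⟨rfl, rfl, hb, hd⟩ := DZeroElt.mk.inj h
  cases hb; cases hd
  exact ⟨a, rfl, rfl⟩

lemma isPullback_genericTerm_genericType {A B : C} {d : A ⟶ B} (hd : D d) :
    IsPullback (genericTerm hd) (yoneda.map d) (piD D) (genericType hd) := by
  refine IsPullback.of_forall_isPullback_app fun c => ?_
  rw [Types.isPullback_iff]
  refine ⟨?_, ?_, ?_⟩
  · ext u
    exact (congrArg ((piD D).app c) (genericTerm_app_apply hd u)).trans
      (genericType_app_apply hd (u ≫ d)).symm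
  · rintro u₁ u₂ ⟨h, -⟩
    rw [genericTerm_app_apply, genericTerm_app_apply] at h
    exact eq_of_heq (DOneElt.mk.inj h).2.2.1
  · intro e v h
    rw [genericType_app_apply] at h
    obtain ⟨a, rfl, rfl⟩ := DOneElt.eq_mk_of_piD_app_eq h
    exact ⟨a, genericTerm_app_apply hd a, rfl⟩

lemma StableClass.mem_of_isPullback (hD : StableClass D) {X Y : C} {g : X ⟶ Y}
    {x : yoneda.obj Y ⟶ DZero D} {η : yoneda.obj X ⟶ DOne D}
    (hpb : IsPullback η (yoneda.map g) (piD D) x) : D g := by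
  obtain ⟨⟨b, d', hd'⟩, rfl⟩ := yonedaEquiv.symm.surjective x
  obtain ⟨⟨a, d, hd⟩, rfl⟩ := yonedaEquiv.symm.surjective η
  rw [yonedaEquiv_symm_dZeroElt_mk, yonedaEquiv_symm_dOneElt_mk] at hpb
  have hcomm := congrArg (fun f => f.app (op X) (𝟙 X)) hpb.w
  simp only [NatTrans.comp_app_apply, yoneda_map_app, genericTerm_app_apply,
    genericType_app_apply, piD_app_mk] at hcomm
  obtain ⟨rfl, rfl, hb, rfl⟩ := DZeroElt.mk.inj hcomm
  have hw : a ≫ d = g ≫ b := by simpa using eq_of_heq hb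
  have hsq : IsPullback (yoneda.map a) (yoneda.map g) (yoneda.map d) (yoneda.map b) :=
    hpb.of_right (by simp only [← Functor.map_comp, hw]) (isPullback_genericTerm_genericType hd)
  exact hD a g d b (hsq.of_map yoneda hw) hd

/-- For a stable class `𝒟` with associated representable natural
transformation `π : 𝒟₁ ⟶ 𝒟₀`, a morphism `g` lies in `𝒟` if and only if it arises as the
left-hand vertical map of a presheaf pullback square over `π`; that is, `𝒟` is exactly the
stable class of maps determined by `π`. -/
theorem mem_iff_display (D : MorphismProperty C) (hD : StableClass D)
    {X Y : C} (g : X ⟶ Y) :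
    D g ↔ ∃ (x : yoneda.obj Y ⟶ DZero D) (η : yoneda.obj X ⟶ DOne D),
      IsPullback η (yoneda.map g) (piD D) x :=
  ⟨fun hg => ⟨_, _, isPullback_genericTerm_genericType hg⟩,
    fun ⟨_, _, hpb⟩ => hD.mem_of_isPullback hpb⟩

end NatModel

end
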